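/- Let n ≥ 15 and 2 ≤ k ≤ ⌊n/2⌋ be integers. Then every complex root of the polynomial (n−1)x + (C(k,2) + C(n−k,2))x² + (k−1)(n−k−1)x³ is real. Here C(m,2) = m(m−1)/2. -/

import Mathlib

set_option linter.unusedVariables false

/-- The Wiener polynomial of a graph `G`, evaluated at `x : ℂ`:
`W(G;x) = Σ x^{d(u,v)}`, the sum over all unordered pairs of distinct vertices. -/
noncomputable def wienerPoly {V : Type*} [Fintype V] [DecidableEq V]
    (G : SimpleGraph V) (x : ℂ) : ℂ :=
  ∑ p ∈ (Finset.univ : Finset V).sym2.filter (fun p => ¬ p.IsDiag),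
    x ^ Sym2.lift ⟨fun u v => G.dist u v, fun u v => SimpleGraph.dist_comm⟩ p

/-- `distCount G i` is `d_i(G)`, the number of unordered pairs of distinct
vertices of `G` at graph distance exactly `i`. -/
noncomputable def distCount {V : Type*} [Fintype V] [DecidableEq V]
    (G : SimpleGraph V) (i : ℕ) : ℕ :=
  (((Finset.univ : Finset V).sym2.filter (fun p => ¬ p.IsDiag)).filter
    (fun p => Sym2.lift ⟨fun u v => G.dist u v, fun u v => SimpleGraph.dist_comm⟩ p = i)).card

/-- The complete graph on `n` vertices minus one edge. -/
def KminusE (n : ℕ) [NeZero n] : SimpleGraph (Fin n) :=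
  (⊤ : SimpleGraph (Fin n)).deleteEdges {s(0, 1)}

/-- The star `K_{1,n-1}`: the center `0` is adjacent to the `n - 1` other vertices. -/
def starGraph (n : ℕ) [NeZero n] : SimpleGraph (Fin n) where
  Adj u v := u ≠ v ∧ (u = 0 ∨ v = 0)
  symm := by
    refine ⟨?_⟩
    intro u v h
    exact ⟨h.1.symm, h.2.symm⟩
  loopless := by
    refine ⟨?_⟩
    intro u h
    exact h.1 rfl


lemma aux_real_roots (a b c : ℝ) (hc : 0 < c) (hd : 4*a*c ≤ b^2) (z : ℂ)
    (h : (a:ℂ)*z + (b:ℂ)*z^2 + (c:ℂ)*z^3 = 0) : z.im = 0 := by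
  by_contra hy
  have hz0 : z ≠ 0 := fun h0 => hy (by simp [h0])
  have hq : (c:ℂ)*z^2 + (b:ℂ)*z + (a:ℂ) = 0 := by
    have h2 : ((c:ℂ)*z^2 + (b:ℂ)*z + (a:ℂ))*z = 0*z := by ring_nf; linear_combination h
    exact mul_right_cancel₀ hz0 h2
  set x := z.re with hxdef
  set y := z.im with hydef
  have him : c*(x*y + y*x) + b*y = 0 := by
    have := congrArg Complex.im hq
    simpa [pow_two, Complex.mul_im, Complex.mul_re, Complex.add_im] using this
  have hre : c*(x*x - y*y) + b*x + a = 0 := by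
    have := congrArg Complex.re hq
    simpa [pow_two, Complex.mul_im, Complex.mul_re, Complex.add_re] using this
  have hx : 2*c*x + b = 0 := by
    have h3 : (2*c*x + b)*y = 0 := by linarith [him]
    rcases mul_eq_zero.1 h3 with h4 | h4
    · exact h4
    · exact absurd h4 hy
  have hy2 : 0 < y^2 := by positivity
  nlinarith [mul_pos hc hc, mul_pos (mul_pos hc hc) hy2, hre, hx, hd]

/-- For `n ≥ 15` and `2 ≤ k ≤ ⌊n/2⌋`, every complex root of
`(n-1)x + (C(k,2) + C(n-k,2))x² + (k-1)(n-k-1)x³` is real. -/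
theorem stmt_13 (n k : ℕ) (hn : 15 ≤ n) (hk2 : 2 ≤ k) (hk : k ≤ n / 2) :
    ∀ z : ℂ,
      ((n : ℂ) - 1) * z
        + ((k : ℂ) * ((k : ℂ) - 1) / 2
            + ((n : ℂ) - (k : ℂ)) * ((n : ℂ) - (k : ℂ) - 1) / 2) * z ^ 2
        + ((k : ℂ) - 1) * ((n : ℂ) - (k : ℂ) - 1) * z ^ 3 = 0 →
      z.im = 0 := by
  intro z hz
  have hk' : 2*k ≤ n := by omega
  have hn' : (15:ℝ) ≤ (n:ℝ) := by exact_mod_cast hn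
  have hk2' : (2:ℝ) ≤ (k:ℝ) := by exact_mod_cast hk2
  have h2k : 2*(k:ℝ) ≤ (n:ℝ) := by exact_mod_cast hk'
  set a : ℝ := (n:ℝ) - 1 with hadef
  set b : ℝ := (k:ℝ)*((k:ℝ)-1)/2 + ((n:ℝ)-(k:ℝ))*((n:ℝ)-(k:ℝ)-1)/2 with hbdef
  set c : ℝ := ((k:ℝ)-1)*((n:ℝ)-(k:ℝ)-1) with hcdef
  have hc : 0 < c := by rw [hcdef]; nlinarith
  have hd : 4*a*c ≤ b^2 := by
    rw [hadef, hbdef, hcdef]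
    nlinarith [sq_nonneg ((k:ℝ) - ((n:ℝ)-(k:ℝ))), sq_nonneg ((n:ℝ)-2),
      sq_nonneg ((n:ℝ)*((n:ℝ)-2)/4 - ((n:ℝ)-1)),
      mul_nonneg (by linarith : (0:ℝ) ≤ (n:ℝ)-1) (sq_nonneg ((k:ℝ) - ((n:ℝ)-(k:ℝ))))]
  have hz' : (a:ℂ)*z + (b:ℂ)*z^2 + (c:ℂ)*z^3 = 0 := by
    rw [hadef, hbdef, hcdef]; push_cast; linear_combination hz
  exact aux_real_roots a b c hc hd z hz'
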